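/- Theorem 3 (inclusion form). Under the calibration-data setup, assume that each f(x_j) is a probability vector on Y, that f(x_j)_{y_j} ≥ 1/|S_j| for every j ∈ I, and that 1 ≤ ⌈(1+|I|)(1−ε)⌉ ≤ |I|. Then q(E_mean, ε) ≥ q(E_1, ε), and consequently for every point x the inclusion T(x, f, E_1, ε) ⊆ T(x, f, E_mean, ε) holds. -/

import Mathlib

/-- The m-th smallest element (1-indexed, with multiplicity) of a finite multiset of reals. -/
noncomputable def nthSmallest (E : Multiset ℝ) (m : ℕ) : ℝ :=
  (E.sort (· ≤ ·)).getD (m - 1) 0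

/-- The critical score q(E, ε): the ⌈(1+|E|)(1−ε)⌉-th smallest element of E. -/
noncomputable def critScore (E : Multiset ℝ) (ε : ℝ) : ℝ :=
  nthSmallest E (⌈(1 + (Multiset.card E : ℝ)) * (1 - ε)⌉.toNat)

/-- E_1 := {1 − f(x_j)_{y_j} : j ∈ I} (with multiplicity). -/
noncomputable def calE1 {X Y I : Type*} [Fintype I] (f : X → Y → ℝ) (xc : I → X)
    (yt : I → Y) : Multiset ℝ :=
  Finset.univ.val.map fun j => 1 - f (xc j) (yt j)

/-- E_mean := {1 − (Σ_{y∈S_j} f(x_j)_y)/|S_j| : j ∈ I} (with multiplicity). -/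
noncomputable def calEmean {X Y I : Type*} [Fintype I] (f : X → Y → ℝ) (xc : I → X)
    (S : I → Finset Y) : Multiset ℝ :=
  Finset.univ.val.map fun j => 1 - (∑ y ∈ S j, f (xc j) y) / ((S j).card : ℝ)

/-! Since f(x_j) is a probability vector, the mean of f(x_j) over S_j is at most 1/|S_j| ≤ f(x_j)_{y_j},
so E_1 is dominated entry by entry by E_mean. Order statistics are monotone under such a
domination: for sorted lists, the i-th entry is ≤ t exactly when more than i entries are ≤ t, and
domination can only decrease the number of entries ≤ t. -/

section SortedCount

variable {α : Type*} [LinearOrder α]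

theorem List.Pairwise.getElem_le_iff_lt_countP {l : List α} (hl : l.Pairwise (· ≤ ·)) {i : ℕ}
    (hi : i < l.length) (t : α) : l[i] ≤ t ↔ i < l.countP (· ≤ t) := by
  constructor
  · intro hit
    have htake : (l.take (i + 1)).countP (· ≤ t) = i + 1 := by
      rw [List.countP_eq_length.mpr, List.length_take, min_eq_left hi]
      intro x hx
      obtain ⟨j, hj, rfl⟩ := List.mem_take_iff_getElem.mp hx
      have hji : l[j] ≤ l[i] := hl.rel_get_of_le (a := ⟨j, _⟩) (b := ⟨i, hi⟩) (by simp; omega)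
      simpa using hji.trans hit
    calc i < (l.take (i + 1)).countP (· ≤ t) := by omega
      _ ≤ l.countP (· ≤ t) := (List.take_sublist _ _).countP_le
  · intro hcount
    by_contra! hti
    have hdrop : (l.drop i).countP (· ≤ t) = 0 := by
      rw [List.countP_eq_zero]
      intro x hx
      obtain ⟨k, hk, rfl⟩ := List.mem_iff_getElem.mp hx
      have hlt : i + k < l.length := by rw [List.length_drop] at hk; omega
      have hik : l[i] ≤ l[i + k] := hl.rel_get_of_le (a := ⟨i, hi⟩) (b := ⟨i + k, hlt⟩) (by simp)
      simpa using hti.trans_le hik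
    have htake : (l.take i).countP (· ≤ t) ≤ i :=
      List.countP_le_length.trans (List.length_take_le _ _)
    have := List.countP_append (l₁ := l.take i) (l₂ := l.drop i) (p := (· ≤ t))
    rw [List.take_append_drop] at this
    omega

theorem Multiset.countP_le_countP_of_rel {s t : Multiset α} (h : Multiset.Rel (· ≤ ·) s t)
    (x : α) : t.countP (· ≤ x) ≤ s.countP (· ≤ x) := by
  induction h with
  | zero => simp
  | @cons a b _ _ hab _ ih =>
    rw [Multiset.countP_cons, Multiset.countP_cons]
    by_cases hb : b ≤ x
    · simp only [hb, hab.trans hb, if_true]; omega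
    · simp only [hb, if_false]; split <;> omega

end SortedCount

theorem nthSmallest_mono {s t : Multiset ℝ} (h : Multiset.Rel (· ≤ ·) s t) (m : ℕ) :
    nthSmallest s m ≤ nthSmallest t m := by
  have hlen : (s.sort (· ≤ ·)).length = (t.sort (· ≤ ·)).length := by
    simp only [Multiset.length_sort]; exact Multiset.card_eq_card_of_rel h
  unfold nthSmallest
  by_cases hi : m - 1 < (t.sort (· ≤ ·)).length
  · rw [List.getD_eq_getElem _ _ (hlen ▸ hi), List.getD_eq_getElem _ _ hi,
      (Multiset.pairwise_sort s (· ≤ ·)).getElem_le_iff_lt_countP]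
    set q := (t.sort (· ≤ ·))[m - 1]
    calc m - 1 < (t.sort (· ≤ ·)).countP (· ≤ q) :=
          ((Multiset.pairwise_sort t (· ≤ ·)).getElem_le_iff_lt_countP hi q).mp le_rfl
      _ ≤ (s.sort (· ≤ ·)).countP (· ≤ q) := by
          rw [← Multiset.coe_countP, ← Multiset.coe_countP, Multiset.sort_eq, Multiset.sort_eq]
          exact Multiset.countP_le_countP_of_rel h _
  · rw [List.getD_eq_default _ _ (by omega), List.getD_eq_default _ _ (by omega)]

theorem critScore_mono {s t : Multiset ℝ} (h : Multiset.Rel (· ≤ ·) s t) (ε : ℝ) :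
    critScore s ε ≤ critScore t ε := by
  rw [critScore, critScore, Multiset.card_eq_card_of_rel h]
  exact nthSmallest_mono h _

theorem calE1_rel_calEmean {X Y I : Type*} [Fintype Y] [Fintype I]
    (f : X → Y → ℝ) (xc : I → X) (S : I → Finset Y) (yt : I → Y)
    (hprob : ∀ j, (∀ y, 0 ≤ f (xc j) y) ∧ (∑ y, f (xc j) y) = 1)
    (hbig : ∀ j, f (xc j) (yt j) ≥ 1 / ((S j).card : ℝ)) :
    Multiset.Rel (· ≤ ·) (calE1 f xc yt) (calEmean f xc S) := by
  rw [calE1, calEmean, Multiset.rel_map]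
  refine Multiset.rel_refl_of_refl_on fun j _ => ?_
  have hsum : ∑ y ∈ S j, f (xc j) y ≤ 1 := (hprob j).2 ▸
    Finset.sum_le_sum_of_subset_of_nonneg (Finset.subset_univ _) fun y _ _ => (hprob j).1 y
  have hmean := div_le_div_of_nonneg_right hsum (Nat.cast_nonneg (S j).card)
  linarith [hbig j]

theorem thm3_inclusion_general {X Y I : Type*} [Fintype Y] [Fintype I]
    (f : X → Y → ℝ) (xc : I → X) (S : I → Finset Y) (yt : I → Y)
    (hprob : ∀ j, (∀ y, 0 ≤ f (xc j) y) ∧ (∑ y, f (xc j) y) = 1)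
    (hbig : ∀ j, f (xc j) (yt j) ≥ 1 / ((S j).card : ℝ))
    (ε : ℝ) :
    critScore (calEmean f xc S) ε ≥ critScore (calE1 f xc yt) ε ∧
      ∀ x : X, {y : Y | f x y ≥ 1 - critScore (calE1 f xc yt) ε} ⊆
        {y : Y | f x y ≥ 1 - critScore (calEmean f xc S) ε} := by
  have hq := critScore_mono (calE1_rel_calEmean f xc S yt hprob hbig) ε
  exact ⟨hq, fun x y (hy : f x y ≥ _) => show f x y ≥ _ by linarith⟩

/-- Theorem 3 (inclusion form). -/
theorem thm3_inclusion {X Y I : Type*} [Fintype Y] [Fintype I]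
    (f : X → Y → ℝ) (xc : I → X) (S : I → Finset Y) (yt : I → Y)
    (hS : ∀ j, (S j).Nonempty) (hy : ∀ j, yt j ∈ S j)
    (hprob : ∀ j, (∀ y, 0 ≤ f (xc j) y) ∧ (∑ y, f (xc j) y) = 1)
    (hbig : ∀ j, f (xc j) (yt j) ≥ 1 / ((S j).card : ℝ))
    (ε : ℝ) (hε0 : 0 < ε) (hε1 : ε ≤ 1)
    (hk1 : 1 ≤ ⌈(1 + (Fintype.card I : ℝ)) * (1 - ε)⌉)
    (hk2 : ⌈(1 + (Fintype.card I : ℝ)) * (1 - ε)⌉ ≤ (Fintype.card I : ℤ)) :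
    critScore (calEmean f xc S) ε ≥ critScore (calE1 f xc yt) ε ∧
      ∀ x : X, {y : Y | f x y ≥ 1 - critScore (calE1 f xc yt) ε} ⊆
        {y : Y | f x y ≥ 1 - critScore (calEmean f xc S) ε} :=
  thm3_inclusion_general f xc S yt hprob hbig ε
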